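/- For every k > 0 and every y ≥ 0, the Poisson log-exp reparameterized data-fit ψ_{k,y} is differentiable on all of ℝ and there exists a constant L ≥ 0 such that the derivative of ψ_{k,y} is Lipschitz continuous on ℝ with constant L. -/

import Mathlib

/-!
With `s = log (1 + exp θ)` (softplus) and `σ = s'` (the logistic sigmoid), the derivative of
`ψ_{k,y} = k s - y log (k s)` is `k σ - y σ / s`. Both `σ` and `σ / s` are globally Lipschitz:
`σ' = σ (1 - σ) ∈ [0, 1/4]`, and `(σ / s)' = σ ((1 - σ) s - σ) / s²` lies in `[-1, 0]` by the
elementary bounds `σ ≤ s ≤ exp θ`, which are `1 - 1/x ≤ log x ≤ x - 1` at `x = 1 + exp θ`.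
-/

open Real NNReal

namespace Real

noncomputable def softplus (θ : ℝ) : ℝ := log (1 + exp θ)

lemma softplus_pos (θ : ℝ) : 0 < softplus θ :=
  log_pos (lt_add_of_pos_right 1 (exp_pos θ))

lemma sigmoid_eq_exp_div (θ : ℝ) : sigmoid θ = exp θ / (1 + exp θ) := by
  rw [sigmoid_def, exp_neg]
  field_simp
  ring

lemma one_sub_sigmoid_eq_inv (θ : ℝ) : 1 - sigmoid θ = (1 + exp θ)⁻¹ := by
  rw [← sigmoid_neg, sigmoid_def, neg_neg]

lemma hasDerivAt_softplus (θ : ℝ) : HasDerivAt softplus (sigmoid θ) θ := by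
  rw [sigmoid_eq_exp_div]
  exact ((hasDerivAt_exp θ).const_add 1).log (by positivity)

lemma sigmoid_le_softplus (θ : ℝ) : sigmoid θ ≤ softplus θ := by
  have h := one_sub_inv_le_log_of_pos (by positivity : 0 < 1 + exp θ)
  rwa [← one_sub_sigmoid_eq_inv, sub_sub_cancel] at h

lemma softplus_le_exp (θ : ℝ) : softplus θ ≤ exp θ := by
  have h := log_le_sub_one_of_pos (by positivity : 0 < 1 + exp θ)
  rw [softplus]
  linarith

lemma one_sub_sigmoid_mul_softplus_le (θ : ℝ) : (1 - sigmoid θ) * softplus θ ≤ sigmoid θ := by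
  rw [one_sub_sigmoid_eq_inv, sigmoid_eq_exp_div, inv_mul_eq_div]
  gcongr
  exact softplus_le_exp θ

end Real

lemma lipschitzWith_of_abs_deriv_le {f : ℝ → ℝ} {C : ℝ≥0} (hf : Differentiable ℝ f)
    (bound : ∀ x, |deriv f x| ≤ C) : LipschitzWith C f :=
  lipschitzWith_of_nnnorm_deriv_le hf fun x => by
    rw [← NNReal.coe_le_coe, coe_nnnorm, Real.norm_eq_abs]
    exact bound x

lemma lipschitzWith_sigmoid : LipschitzWith 4⁻¹ sigmoid := by
  refine lipschitzWith_of_abs_deriv_le differentiable_sigmoid fun θ => ?_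
  have h0 := sigmoid_pos θ
  have h1 := sigmoid_lt_one θ
  rw [deriv_sigmoid, abs_of_nonneg (by nlinarith)]
  push_cast
  nlinarith [sq_nonneg (2 * sigmoid θ - 1)]

lemma hasDerivAt_sigmoid_div_softplus (θ : ℝ) :
    HasDerivAt (fun θ => sigmoid θ / softplus θ)
      ((sigmoid θ * (1 - sigmoid θ) * softplus θ - sigmoid θ * sigmoid θ) / softplus θ ^ 2) θ :=
  (hasDerivAt_sigmoid θ).div (hasDerivAt_softplus θ) (softplus_pos θ).ne'

lemma lipschitzWith_sigmoid_div_softplus : LipschitzWith 1 (fun θ => sigmoid θ / softplus θ) := by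
  refine lipschitzWith_of_abs_deriv_le
    (fun θ => (hasDerivAt_sigmoid_div_softplus θ).differentiableAt) fun θ => ?_
  have hσ := sigmoid_pos θ
  have hσ1 := sigmoid_lt_one θ
  have hs := softplus_pos θ
  have hσs := sigmoid_le_softplus θ
  have hsσ := one_sub_sigmoid_mul_softplus_le θ
  rw [(hasDerivAt_sigmoid_div_softplus θ).deriv, abs_div, abs_of_pos (pow_pos hs 2),
    NNReal.coe_one, div_le_one (by positivity), abs_le]
  constructor <;> nlinarith [mul_pos hσ hs, mul_pos (sub_pos.2 hσ1) hs]

lemma hasDerivAt_poissonDatafit {k : ℝ} (hk : k ≠ 0) (y θ : ℝ) :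
    HasDerivAt (fun θ => k * softplus θ - y * log (k * softplus θ))
      (k * sigmoid θ - y * (sigmoid θ / softplus θ)) θ := by
  have hks := (hasDerivAt_softplus θ).const_mul k
  have hlog := hks.log (mul_ne_zero hk (softplus_pos θ).ne')
  rw [mul_div_mul_left _ _ hk] at hlog
  exact hks.sub (hlog.const_mul y)

theorem poisson_logexp_datafit_smooth_general
    (k : ℝ) (hk : 0 < k) (y : ℝ) :
    Differentiable ℝ (fun θ : ℝ =>
      k * Real.log (1 + Real.exp θ)
        - y * Real.log (k * Real.log (1 + Real.exp θ))) ∧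
    ∃ L : ℝ, 0 ≤ L ∧ ∀ a b : ℝ,
      |deriv (fun θ : ℝ =>
        k * Real.log (1 + Real.exp θ)
          - y * Real.log (k * Real.log (1 + Real.exp θ))) a
       - deriv (fun θ : ℝ =>
        k * Real.log (1 + Real.exp θ)
          - y * Real.log (k * Real.log (1 + Real.exp θ))) b| ≤ L * |a - b| := by
  have hψ := hasDerivAt_poissonDatafit hk.ne' y
  have hderiv : deriv (fun θ => k * softplus θ - y * log (k * softplus θ)) =
      fun θ => k * sigmoid θ - y * (sigmoid θ / softplus θ) :=
    funext fun θ => (hψ θ).deriv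
  obtain ⟨K, hlip⟩ : ∃ K, LipschitzWith K
      (deriv fun θ => k * softplus θ - y * log (k * softplus θ)) := by
    rw [hderiv]
    exact ⟨_, ((lipschitzWith_smul k).comp lipschitzWith_sigmoid).sub
      ((lipschitzWith_smul y).comp lipschitzWith_sigmoid_div_softplus)⟩
  refine ⟨fun θ => (hψ θ).differentiableAt, K, K.coe_nonneg, fun a b => ?_⟩
  have h := hlip.dist_le_mul a b
  rw [Real.dist_eq, Real.dist_eq] at h
  exact h

/-- **Poisson log-exp reparameterized data-fit is smooth with Lipschitz gradient.**
For every k > 0 and every y ≥ 0, ψ_{k,y} is differentiable on all of ℝ and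
its derivative is Lipschitz continuous on ℝ with some constant L ≥ 0. -/
theorem poisson_logexp_datafit_smooth
    (k : ℝ) (hk : 0 < k) (y : ℝ) (hy : 0 ≤ y) :
    Differentiable ℝ (fun θ : ℝ =>
      k * Real.log (1 + Real.exp θ)
        - y * Real.log (k * Real.log (1 + Real.exp θ))) ∧
    ∃ L : ℝ, 0 ≤ L ∧ ∀ a b : ℝ,
      |deriv (fun θ : ℝ =>
        k * Real.log (1 + Real.exp θ)
          - y * Real.log (k * Real.log (1 + Real.exp θ))) a
       - deriv (fun θ : ℝ =>
        k * Real.log (1 + Real.exp θ)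
          - y * Real.log (k * Real.log (1 + Real.exp θ))) b| ≤ L * |a - b| :=
  poisson_logexp_datafit_smooth_general k hk y
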